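/- The invariant trace form τ on the Clifford algebra C = Cℓ(H, Q), defined by τ(u, v) = Tr(L_{u·v̄}) with v̄ = α(β(v)), is symmetric: τ(u, v) = τ(v, u) for all u, v ∈ C. -/

import Mathlib

open CliffordAlgebra

/-- The invariant trace form `τ(u, v) = Tr (L_{u * v̄})` on the Clifford algebra,
where `v̄ = involute (reverse v)` and `L_w` is left multiplication by `w`. -/
noncomputable def invariantTraceForm
    {k : Type*} [Field k]
    {H : Type*} [AddCommGroup H] [Module k H]
    (Q : QuadraticForm k H) (u v : CliffordAlgebra Q) : k :=
  LinearMap.trace k (CliffordAlgebra Q)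
    (LinearMap.mulLeft k (u * involute (reverse v)))

/-!
Write `T a = Tr (L_a)`. Since `v ↦ v̄` is an anti-automorphism and `T` is invariant under the
automorphism `involute`, `τ(v, u) = T (v ū) = T (reverse (u v̄))`, so it suffices that
`T ∘ reverse = T`. The difference `T ∘ reverse - T` is cyclic, invariant under `involute` and
kills `1`. Any such functional vanishes on a Clifford algebra (away from 2-torsion): it kills odd
products of vectors by parity, and on an even product `x b` the vector `x` anticommutes past the
odd product `b` up to a shorter even product, so cyclicity gives `2 f (x b) = 0` by induction on
the length.
-/

section TraceMulLeft

variable (R A : Type*) [CommRing R] [Ring A] [Algebra R A]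

noncomputable def traceMulLeft : A →ₗ[R] R :=
  LinearMap.trace R A ∘ₗ (Algebra.lmul R A).toLinearMap

variable {R A}

theorem traceMulLeft_apply (a : A) :
    traceMulLeft R A a = LinearMap.trace R A (LinearMap.mulLeft R a) :=
  rfl

theorem traceMulLeft_mul_comm (a b : A) :
    traceMulLeft R A (a * b) = traceMulLeft R A (b * a) := by
  simp only [traceMulLeft_apply, LinearMap.mulLeft_mul, ← Module.End.mul_eq_comp,
    LinearMap.trace_mul_comm]

theorem traceMulLeft_algEquiv (e : A ≃ₐ[R] A) (a : A) :
    traceMulLeft R A (e a) = traceMulLeft R A a := by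
  have : LinearMap.mulLeft R (e a) = e.toLinearEquiv.conj (LinearMap.mulLeft R a) := by
    ext x
    simp [LinearEquiv.conj_apply]
  rw [traceMulLeft_apply, this, LinearMap.trace_conj', traceMulLeft_apply]

end TraceMulLeft

namespace CliffordAlgebra

variable {R M : Type*} [CommRing R] [AddCommGroup M] [Module R M] {Q : QuadraticForm R M}

theorem ι_mul_add_neg_one_pow_smul_mul_ι_mem (x : M) :
    ∀ (m : ℕ) {b : CliffordAlgebra Q}, b ∈ LinearMap.range (ι Q) ^ (m + 1) →
      ι Q x * b + (-1 : R) ^ m • (b * ι Q x) ∈ LinearMap.range (ι Q) ^ m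
  | 0, b, hb => by
    obtain ⟨y, rfl⟩ := (pow_one (LinearMap.range (ι Q))) ▸ hb
    simp only [pow_zero, one_smul, ι_mul_ι_add_swap]
    exact Submodule.algebraMap_mem _
  | m + 1, b, hb => by
    rw [pow_succ'] at hb ⊢
    induction hb using Submodule.mul_induction_on' with
    | mem_mul_mem y hy c hc =>
      obtain ⟨y, rfl⟩ := hy
      have hswap : ι Q x * (ι Q y * c) + (-1 : R) ^ (m + 1) • (ι Q y * c * ι Q x) =
          QuadraticMap.polar Q x y • c - ι Q y * (ι Q x * c + (-1 : R) ^ m • (c * ι Q x)) := by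
        rw [← mul_assoc, ι_mul_ι_comm, sub_mul, ← Algebra.smul_def, pow_succ, mul_neg_one, neg_smul]
        simp only [mul_add, mul_smul_comm, mul_assoc]
        abel
      rw [hswap]
      refine Submodule.sub_mem _ (Submodule.smul_mem _ _ ?_) ?_
      · rwa [← pow_succ']
      · exact Submodule.mul_mem_mul (LinearMap.mem_range_self _ _)
          (ι_mul_add_neg_one_pow_smul_mul_ι_mem x m hc)
    | add b₁ _ b₂ _ h₁ h₂ =>
      simpa only [mul_add, add_mul, smul_add, add_add_add_comm] using Submodule.add_mem _ h₁ h₂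

theorem range_ι_pow_le_evenOdd (n : ℕ) : LinearMap.range (ι Q) ^ n ≤ evenOdd Q n :=
  le_iSup (fun j : { i : ℕ // (i : ZMod 2) = n } => LinearMap.range (ι Q) ^ (j : ℕ)) ⟨n, rfl⟩

section CyclicFunctional

variable {N : Type*} [AddCommGroup N] [Module R N] [IsAddTorsionFree N]
  {f : CliffordAlgebra Q →ₗ[R] N}

theorem map_eq_zero_of_mem_evenOdd_one (hinv : ∀ a, f (involute a) = f a)
    {a : CliffordAlgebra Q} (ha : a ∈ evenOdd Q 1) : f a = 0 := by
  rw [← self_eq_neg, ← map_neg, ← involute_eq_of_mem_odd ha, hinv]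

theorem eq_zero_of_map_mul_comm_of_map_involute (hcomm : ∀ a b, f (a * b) = f (b * a))
    (hinv : ∀ a, f (involute a) = f a) (hone : f 1 = 0) : f = 0 := by
  have hodd : ∀ n, Odd n → LinearMap.range (ι Q) ^ n ≤ LinearMap.ker f := fun n hn a ha =>
    map_eq_zero_of_mem_evenOdd_one hinv <|
      hn.natCast_zmod_two ▸ range_ι_pow_le_evenOdd n ha
  have hpow : ∀ n, LinearMap.range (ι Q) ^ n ≤ LinearMap.ker f := by
    intro n
    induction n using Nat.twoStepInduction with
    | zero =>
      rw [pow_zero, Submodule.one_eq_range]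
      rintro _ ⟨r, rfl⟩
      simp [Algebra.algebraMap_eq_smul_one, hone]
    | one => exact hodd 1 odd_one
    | more n hn _ =>
      rcases n.even_or_odd with he | ho
      · rw [pow_succ', Submodule.mul_le]
        rintro _ ⟨x, rfl⟩ b hb
        have hsum := hn (ι_mul_add_neg_one_pow_smul_mul_ι_mem x n hb)
        rwa [LinearMap.mem_ker, map_add, map_smul, he.neg_one_pow, one_smul, hcomm b, ← two_nsmul,
          nsmul_eq_zero_iff_right two_ne_zero] at hsum
      · exact hodd (n + 2) (by simpa [Nat.odd_add] using ho)
  rw [← LinearMap.ker_eq_top, eq_top_iff, ← iSup_ι_range_eq_top]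
  exact iSup_le hpow

theorem map_reverse_of_map_mul_comm_of_map_involute (hcomm : ∀ a b, f (a * b) = f (b * a))
    (hinv : ∀ a, f (involute a) = f a) (a : CliffordAlgebra Q) : f (reverse a) = f a := by
  suffices f ∘ₗ reverse - f = 0 from sub_eq_zero.mp (LinearMap.congr_fun this a)
  refine eq_zero_of_map_mul_comm_of_map_involute (fun a b => ?_) (fun a => ?_) ?_
  · simp only [LinearMap.sub_apply, LinearMap.comp_apply, reverse.map_mul, hcomm a b,
      hcomm (reverse b)]
  · simp only [LinearMap.sub_apply, LinearMap.comp_apply, reverse_involute, hinv]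
  · simp

end CyclicFunctional

theorem traceMulLeft_involute (a : CliffordAlgebra Q) :
    traceMulLeft R _ (involute a) = traceMulLeft R _ a :=
  traceMulLeft_algEquiv involuteEquiv a

theorem traceMulLeft_reverse [IsAddTorsionFree R] (a : CliffordAlgebra Q) :
    traceMulLeft R _ (reverse a) = traceMulLeft R _ a :=
  map_reverse_of_map_mul_comm_of_map_involute traceMulLeft_mul_comm
    traceMulLeft_involute a

end CliffordAlgebra

theorem invariantTraceForm_symm
    {k : Type*} [Field k] [CharZero k]
    {H : Type*} [AddCommGroup H] [Module k H]
    (Q : QuadraticForm k H)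
    (u v : CliffordAlgebra Q) :
    invariantTraceForm Q u v = invariantTraceForm Q v u := by
  change traceMulLeft k _ _ = traceMulLeft k _ _
  calc traceMulLeft k _ (u * involute (reverse v))
      = traceMulLeft k _ (involute u * reverse v) := by
        rw [← traceMulLeft_involute, map_mul, involute_involute]
    _ = traceMulLeft k _ (reverse (involute u * reverse v)) := (traceMulLeft_reverse _).symm
    _ = traceMulLeft k _ (v * involute (reverse u)) := by
        rw [reverse.map_mul, reverse_reverse, reverse_involute]
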